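/- arXiv:1904.10693 — 2 statements merged into one kernel-verified Lean document; each statement's English description precedes it below -/
import Mathlib

section
/- For every N ∈ ℕ, the intertwining relation D_N Λ̂_N = Λ̂_N L_N holds: for every function f : {0,…,N} → ℝ and every x ∈ {0,…,N}, D_N[Λ̂_N[f]](x) = Λ̂_N[L_N[f]](x). -/
/-- The Ehrenfest generator `L_N` acting on functions:
`L_N[f](x) = ((N-x)/2)(f(x+1)-f(x)) + (x/2)(f(x-1)-f(x))`. -/
noncomputable def ehrenfest (N : ℕ) (f : ℕ → ℝ) (x : ℕ) : ℝ :=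
  (((N : ℝ) - (x : ℝ)) / 2) * (f (x + 1) - f x) + ((x : ℝ) / 2) * (f (x - 1) - f x)

/-- The Yule (pure-death) generator: `D[f](y) = y (f(y-1) - f(y))`. -/
noncomputable def yule (f : ℕ → ℝ) (y : ℕ) : ℝ :=
  (y : ℝ) * (f (y - 1) - f y)

/-- The Markov kernel `Λ̂_N` on `{0,…,N}`: `Λ̂_N(x,y) = 2^{x-N} C(N-x, y-x)` for `x ≤ y`,
and `0` otherwise. -/
noncomputable def lamHat (N x y : ℕ) : ℝ :=
  if x ≤ y then (2 : ℝ) ^ ((x : ℤ) - (N : ℤ)) * (((N - x).choose (y - x)) : ℝ) else 0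

open Finset

/-- Shift identity: `∑ C(m,k)(m-k) g(k+1) = ∑ C(m,k) k g(k)`. -/
lemma shift_sum (m : ℕ) (g : ℕ → ℝ) :
    ∑ k ∈ range (m + 1), (m.choose k : ℝ) * ((m : ℝ) - k) * g (k + 1)
      = ∑ k ∈ range (m + 1), (m.choose k : ℝ) * k * g k := by
  rw [Finset.sum_range_succ, Finset.sum_range_succ']
  simp only [sub_self, mul_zero, zero_mul, add_zero, Nat.cast_zero]
  apply Finset.sum_congr rfl
  intro i hi
  have hi' : i ≤ m := le_of_lt (Finset.mem_range.mp hi)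
  have h := Nat.choose_succ_right_eq m i
  have hcast : (m.choose (i + 1) : ℝ) * (i + 1) = (m.choose i : ℝ) * ((m : ℝ) - i) := by
    have := congrArg (Nat.cast : ℕ → ℝ) h
    push_cast [Nat.cast_sub hi'] at this
    linarith [this]
  calc (m.choose i : ℝ) * ((m : ℝ) - i) * g (i + 1)
      = (m.choose (i + 1) : ℝ) * (i + 1) * g (i + 1) := by rw [hcast]
    _ = (m.choose (i + 1) : ℝ) * (↑(i + 1)) * g (i + 1) := by push_cast; ring

/-- Pascal identity for sums. -/
lemma pascal_sum (m : ℕ) (g : ℕ → ℝ) :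
    ∑ k ∈ range (m + 2), ((m + 1).choose k : ℝ) * g k
      = ∑ k ∈ range (m + 1), (m.choose k : ℝ) * g k
        + ∑ k ∈ range (m + 1), (m.choose k : ℝ) * g (k + 1) := by
  have haux : ∑ i ∈ range (m + 1), (m.choose (i + 1) : ℝ) * g (i + 1) + g 0
      = ∑ k ∈ range (m + 1), (m.choose k : ℝ) * g k := by
    rw [Finset.sum_range_succ, Nat.choose_succ_self, Finset.sum_range_succ']
    simp
  rw [Finset.sum_range_succ']
  simp only [Nat.choose_succ_succ, Nat.cast_add, add_mul, Nat.choose_zero_right, Nat.cast_one,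
    one_mul]
  rw [Finset.sum_add_distrib]
  rw [show ∀ a b c : ℝ, a + b + c = (b + c) + a by intros; ring, haux]

/-- The core cancellation identity. -/
lemma core (m x : ℕ) (f : ℕ → ℝ) :
    ∑ k ∈ range (m + 1), (m.choose k : ℝ) * ehrenfest (x + m) f (x + k)
      = ((x : ℝ) / 2) * ∑ k ∈ range (m + 1), (m.choose k : ℝ) * (f (x + k - 1) - f (x + k)) := by
  have h1 : ∑ k ∈ range (m + 1), (m.choose k : ℝ) * ((m : ℝ) - k) * f (x + k + 1)
      = ∑ k ∈ range (m + 1), (m.choose k : ℝ) * k * f (x + k) := by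
    exact shift_sum m (fun k => f (x + k))
  have h2 : ∑ k ∈ range (m + 1), (m.choose k : ℝ) * ((m : ℝ) - k) * f (x + k)
      = ∑ k ∈ range (m + 1), (m.choose k : ℝ) * k * f (x + k - 1) := by
    exact shift_sum m (fun k => f (x + k - 1))
  have key : ∀ k ∈ range (m + 1),
      (m.choose k : ℝ) * ehrenfest (x + m) f (x + k)
        = (1 / 2) * ((m.choose k : ℝ) * ((m : ℝ) - k) * f (x + k + 1))
          - (1 / 2) * ((m.choose k : ℝ) * ((m : ℝ) - k) * f (x + k))
          + (1 / 2) * ((m.choose k : ℝ) * k * f (x + k - 1))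
          - (1 / 2) * ((m.choose k : ℝ) * k * f (x + k))
          + ((x : ℝ) / 2) * ((m.choose k : ℝ) * (f (x + k - 1) - f (x + k))) := by
    intro k hk
    simp only [ehrenfest]
    push_cast
    ring
  rw [Finset.sum_congr rfl key]
  rw [Finset.sum_add_distrib, Finset.sum_sub_distrib, Finset.sum_add_distrib,
    Finset.sum_sub_distrib, ← Finset.mul_sum, ← Finset.mul_sum, ← Finset.mul_sum,
    ← Finset.mul_sum, ← Finset.mul_sum]
  rw [h1, h2]
  ring

/-- Row sum of the kernel against a function. -/
lemma gsum (N u : ℕ) (hu : u ≤ N) (f : ℕ → ℝ) :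
    ∑ y ∈ range (N + 1), lamHat N u y * f y
      = (2 : ℝ) ^ ((u : ℤ) - (N : ℤ))
          * ∑ k ∈ range (N - u + 1), ((N - u).choose k : ℝ) * f (u + k) := by
  have h1 : ∑ y ∈ range (N + 1), lamHat N u y * f y
      = ∑ y ∈ Finset.Ico u (N + 1), lamHat N u y * f y := by
    refine (Finset.sum_subset ?_ ?_).symm
    · intro y hy
      simp only [Finset.mem_Ico] at hy
      exact Finset.mem_range.mpr hy.2
    · intro y hy hyn
      simp only [Finset.mem_range] at hy
      simp only [Finset.mem_Ico, not_and, not_lt] at hyn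
      have : ¬ u ≤ y := by
        intro h
        exact absurd (hyn h) (not_le.mpr hy)
      simp [lamHat, this]
  rw [h1, Finset.sum_Ico_eq_sum_range]
  have h2 : N + 1 - u = N - u + 1 := by omega
  rw [h2, Finset.mul_sum]
  apply Finset.sum_congr rfl
  intro k hk
  have : lamHat N u (u + k) = (2 : ℝ) ^ ((u : ℤ) - (N : ℤ)) * ((N - u).choose k : ℝ) := by
    simp [lamHat, Nat.le_add_right]
  rw [this, mul_assoc]

/-- The intertwining relation `D_N Λ̂_N = Λ̂_N L_N` between the Yule and Ehrenfest
generators on `{0,…,N}`. -/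
theorem yule_ehrenfest_intertwining (N : ℕ) (f : ℕ → ℝ) (x : ℕ) (hx : x ≤ N) :
    yule (fun u => ∑ y ∈ Finset.range (N + 1), lamHat N u y * f y) x =
      ∑ y ∈ Finset.range (N + 1), lamHat N x y * ehrenfest N f y := by
  obtain ⟨m, rfl⟩ : ∃ m, N = x + m := ⟨N - x, by omega⟩
  have hmx : x + m - x = m := by omega
  simp only [yule]
  rw [gsum (x + m) x (by omega) f, gsum (x + m) (x - 1) (by omega) f,
    gsum (x + m) x (by omega) (ehrenfest (x + m) f)]
  rw [hmx]
  rw [core m x f]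
  obtain _ | x' := x
  · simp
  · have hx1 : x' + 1 - 1 = x' := rfl
    have hm1 : x' + 1 + m - (x' + 1 - 1) = m + 1 := by omega
    rw [hm1, hx1]
    rw [pascal_sum m (fun k => f (x' + k))]
    have e1 : ∑ k ∈ range (m + 1), (m.choose k : ℝ) * f (x' + k)
        = ∑ k ∈ range (m + 1), (m.choose k : ℝ) * f (x' + 1 + k - 1) := by
      refine Finset.sum_congr rfl fun k hk => ?_
      have h : x' + 1 + k - 1 = x' + k := by omega
      rw [h]
    have e2 : ∑ k ∈ range (m + 1), (m.choose k : ℝ) * f (x' + (k + 1))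
        = ∑ k ∈ range (m + 1), (m.choose k : ℝ) * f (x' + 1 + k) := by
      refine Finset.sum_congr rfl fun k hk => ?_
      have h : x' + 1 + k = x' + (k + 1) := by omega
      rw [h]
    rw [e1, e2]
    have e3 : ∑ k ∈ range (m + 1), (m.choose k : ℝ) * (f (x' + 1 + k - 1) - f (x' + 1 + k))
        = (∑ k ∈ range (m + 1), (m.choose k : ℝ) * f (x' + 1 + k - 1))
          - ∑ k ∈ range (m + 1), (m.choose k : ℝ) * f (x' + 1 + k) := by
      rw [← Finset.sum_sub_distrib]
      exact Finset.sum_congr rfl fun k _ => mul_sub _ _ _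
    rw [e3]
    have hpow : (2 : ℝ) ^ ((x' : ℤ) - (x' + 1 + m : ℕ))
        = (2 : ℝ) ^ (((x' + 1 : ℕ) : ℤ) - (x' + 1 + m : ℕ)) / 2 := by
      rw [eq_div_iff (by norm_num : (2:ℝ) ≠ 0), ← zpow_add_one₀ (by norm_num : (2:ℝ) ≠ 0)]
      congr 1
      push_cast
      ring
    rw [hpow]
    push_cast
    ring
end

section
/- Fix N ∈ ℕ and let a = (a_0,…,a_N) ∈ ℝ^{N+1} satisfy a_0 = 1 and λ_a(y,x) ≥ 0 for all y ∈ {0,…,N} and x ∈ ℝ. Then for every n ∈ {0,…,N}: if n is odd then a_n = 0, and if n is even then a_n ≥ 0. -/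
/-- The probabilists' Hermite polynomials over `ℝ`:
`h_0 = 1`, `h_{n+1}(x) = x h_n(x) - h_n'(x)`. -/
noncomputable def hermiteR : ℕ → Polynomial ℝ
  | 0 => 1
  | n + 1 => Polynomial.X * hermiteR n - Polynomial.derivative (hermiteR n)

/-- `λ_a(y,x) = ∑_{n=0}^{min(y,N)} (a_n / n!) C(y,n) h_n(x)`. -/
noncomputable def lambdaA (N : ℕ) (a : ℕ → ℝ) (y : ℕ) (x : ℝ) : ℝ :=
  ∑ n ∈ Finset.range (min y N + 1), (a n / (n.factorial : ℝ)) * (y.choose n : ℝ) * (hermiteR n).eval x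

lemma hermiteR_eq_map (n : ℕ) :
    hermiteR n = (Polynomial.hermite n).map (Int.castRingHom ℝ) := by
  induction n with
  | zero => simp [hermiteR, Polynomial.hermite]
  | succ n ih =>
      rw [hermiteR, Polynomial.hermite_succ, ih]
      simp [Polynomial.derivative_map]

lemma hermiteR_natDegree (n : ℕ) : (hermiteR n).natDegree = n := by
  rw [hermiteR_eq_map]
  rw [Polynomial.natDegree_map_eq_of_injective (fun a b h => by exact_mod_cast (by simpa using h : (a:ℝ) = b))]
  exact Polynomial.natDegree_hermite

lemma hermiteR_coeff_self (n : ℕ) : (hermiteR n).coeff n = 1 := by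
  rw [hermiteR_eq_map, Polynomial.coeff_map, Polynomial.coeff_hermite_self]
  simp

/-- A polynomial nonnegative on all of `ℝ` has nonnegative leading coefficient and,
if nonzero, even degree. -/
lemma nonneg_poly_even (p : Polynomial ℝ) (hp : ∀ x, 0 ≤ p.eval x) :
    0 ≤ p.leadingCoeff ∧ (p ≠ 0 → Even p.natDegree) := by
  have key : ∀ q : Polynomial ℝ, (∀ x, 0 ≤ q.eval x) → q.leadingCoeff < 0 → False := by
    intro q hq hlc
    rcases eq_or_lt_of_le (Nat.zero_le q.natDegree) with h0 | h0
    · rw [Polynomial.eq_C_of_natDegree_eq_zero h0.symm] at hq hlc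
      exact lt_irrefl (0:ℝ) (lt_of_le_of_lt (hq 0) (by simpa [Polynomial.leadingCoeff] using hlc))
    · have hdeg : 0 < q.degree := by
        rwa [Polynomial.natDegree_pos_iff_degree_pos] at h0
      have := Polynomial.tendsto_atBot_of_leadingCoeff_nonpos q hdeg hlc.le
      obtain ⟨x, hx⟩ := (this.eventually (Filter.eventually_lt_atBot (0:ℝ))).exists
      exact absurd (hq x) (not_le.mpr hx)
  have hlc : 0 ≤ p.leadingCoeff := by
    by_contra h; exact key p hp (not_le.mp h)
  refine ⟨hlc, fun hp0 => ?_⟩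
  by_contra hodd
  rw [Nat.not_even_iff_odd] at hodd
  set q := p.comp (-Polynomial.X) with hq
  have hqn : (-Polynomial.X : Polynomial ℝ).natDegree = 1 := by simp
  have hqlc : q.leadingCoeff = p.leadingCoeff * (-1) ^ p.natDegree := by
    rw [hq, Polynomial.leadingCoeff_comp (by rw [hqn]; exact one_ne_zero)]
    simp
  have hplc : 0 < p.leadingCoeff :=
    lt_of_le_of_ne hlc (Ne.symm (Polynomial.leadingCoeff_ne_zero.mpr hp0))
  have : q.leadingCoeff < 0 := by
    rw [hqlc, hodd.neg_one_pow]
    simpa using hplc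
  exact key q (fun x => by simpa [hq] using hp (-x)) this

/-- If `a_0 = 1` and `λ_a(y,x) ≥ 0` for all `y ∈ {0,…,N}` and `x ∈ ℝ`, then for every
`n ∈ {0,…,N}`: `a_n = 0` if `n` is odd, and `a_n ≥ 0` if `n` is even. -/
theorem lambdaA_nonneg_parity (N : ℕ) (a : ℕ → ℝ) (ha0 : a 0 = 1)
    (hpos : ∀ y, y ≤ N → ∀ x : ℝ, 0 ≤ lambdaA N a y x) :
    ∀ n, n ≤ N → (Odd n → a n = 0) ∧ (Even n → 0 ≤ a n) := by
  intro n hn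
  by_cases han : a n = 0
  · exact ⟨fun _ => han, fun _ => le_of_eq han.symm⟩
  set p : Polynomial ℝ :=
      ∑ k ∈ Finset.range (n+1),
        Polynomial.C (a k / (k.factorial : ℝ) * (n.choose k : ℝ)) * hermiteR k with hp
  have heval : ∀ x, p.eval x = lambdaA N a n x := by
    intro x
    rw [lambdaA, min_eq_left hn, hp]
    rw [Polynomial.eval_finset_sum]
    refine Finset.sum_congr rfl fun k _ => ?_
    simp [mul_assoc]
  have hnonneg : ∀ x, 0 ≤ p.eval x := fun x => (heval x) ▸ hpos n hn x
  have hfac : (0:ℝ) < (n.factorial : ℝ) := by positivity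
  have hcoeff : p.coeff n = a n / (n.factorial : ℝ) := by
    rw [hp, Polynomial.finset_sum_coeff, Finset.sum_eq_single n]
    · simp [Polynomial.coeff_C_mul, hermiteR_coeff_self]
    · intro k hk hkn
      have hklt : k < n := lt_of_le_of_ne (Nat.lt_succ_iff.mp (Finset.mem_range.mp hk)) hkn
      rw [Polynomial.coeff_C_mul,
        Polynomial.coeff_eq_zero_of_natDegree_lt (by rw [hermiteR_natDegree]; exact hklt),
        mul_zero]
    · intro h; exact absurd (Finset.self_mem_range_succ n) h
  have hcoeffne : p.coeff n ≠ 0 := by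
    rw [hcoeff]; exact div_ne_zero han (ne_of_gt hfac)
  have hdegle : p.natDegree ≤ n := by
    apply Polynomial.natDegree_sum_le_of_forall_le
    intro k hk
    refine le_trans (Polynomial.natDegree_C_mul_le _ _) ?_
    rw [hermiteR_natDegree]
    exact Nat.lt_succ_iff.mp (Finset.mem_range.mp hk)
  have hdeg : p.natDegree = n :=
    le_antisymm hdegle (Polynomial.le_natDegree_of_ne_zero hcoeffne)
  have hpne : p ≠ 0 := fun h => hcoeffne (by simp [h])
  obtain ⟨hlc, heven⟩ := nonneg_poly_even p hnonneg
  rw [Polynomial.leadingCoeff, hdeg, hcoeff] at hlc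
  constructor
  · intro hodd
    exact absurd (hdeg ▸ heven hpne) (Nat.not_even_iff_odd.mpr hodd)
  · intro _
    have := mul_nonneg hlc hfac.le
    rwa [div_mul_cancel₀ _ (ne_of_gt hfac)] at this
end
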